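/- arXiv:2008.00227 — 4 statements merged into one kernel-verified Lean document; each statement's English description precedes it below -/
import Mathlib

section
/- Let n ≥ 1 and k ≥ 1. In the ring of multivariate polynomials over ℚ in n variables, the elementary symmetric polynomial c_k of degree k satisfies c_k = Σ_{α ⊨ k} (−1)^{α(2)+α(4)+α(6)+⋯} · (h(α)/k!) · s_1^{α(1)} · s_2^{α(2)} ⋯ s_k^{α(k)}, where the sum runs over all partition symbols α of k and s_i denotes the i-th power sum polynomial. -/
open MvPolynomial

/-- The finite set of partition symbols of `k`: finitely supported functions
`α : ℕ → ℕ` with `α 0 = 0` and `∑ i, i · α i = k`. -/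
noncomputable def partitionSymbols (k : ℕ) : Finset (ℕ →₀ ℕ) :=
  ((Finset.range (k + 1)).finsupp fun _ => Finset.range (k + 1)).filter
    fun α => α 0 = 0 ∧ (α.sum fun i a => i * a) = k

/-- The Cauchy number `h(α) = k! / (∏ i, α i ! · i ^ α i)` of a partition symbol of `k`. -/
noncomputable def cauchyNumber (k : ℕ) (α : ℕ →₀ ℕ) : ℚ :=
  (k.factorial : ℚ) / (α.prod fun i a => (a.factorial : ℚ) * (i : ℚ) ^ a)

/-! Both sides satisfy Newton's identities `k e_k = Σ_{j=1}^k (-1)^(j+1) p_j e_(k-j)` with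
`e_0 = 1`, and these determine the sequence over a `ℚ`-algebra. For the Waring sum, weight the
term of `α` by `k = Σ_j j α(j)`: removing one part `j` is a bijection from the partition symbols
of `k` with `α(j) ≠ 0` onto those of `k - j`, and it changes the coefficient by exactly the
factor `(-1)^(j+1) / (j α(j))`. -/

open Finset

@[to_additive]
lemma Finsupp.prod_add_single_eq_mul_prod_erase {ι M N : Type*} [AddZeroClass M] [CommMonoid N]
    (f : ι →₀ M) (y : ι) (b : M) (g : ι → M → N) (hg : ∀ i, g i 0 = 1) :
    (f + Finsupp.single y b).prod g = g y (f y + b) * (f.erase y).prod g := by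
  rw [← Finsupp.mul_prod_erase' _ y g hg]
  simp [Finsupp.erase_add, Finsupp.erase_single]

section PartitionSymbols

lemma sum_mul_add_single (β : ℕ →₀ ℕ) (j : ℕ) :
    ((β + Finsupp.single j 1).sum fun i a => i * a) = (β.sum fun i a => i * a) + j := by
  rw [Finsupp.sum_add_index' (fun i => mul_zero i) (fun i => mul_add i),
    Finsupp.sum_single_index (mul_zero j), mul_one]

lemma mul_apply_le_sum_mul (α : ℕ →₀ ℕ) (i : ℕ) : i * α i ≤ α.sum fun j a => j * a := by
  by_cases hi : i ∈ α.support
  · exact single_le_sum (f := fun j => j * α j) (fun _ _ => Nat.zero_le _) hi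
  · simp [Finsupp.notMem_support_iff.mp hi]

lemma support_subset_range_of_sum_mul_eq {α : ℕ →₀ ℕ} {k : ℕ}
    (h : (α.sum fun i a => i * a) = k) : α.support ⊆ range (k + 1) := fun i hi =>
  mem_range_succ_iff.mpr <| h ▸ (Nat.le_mul_of_pos_right i
    (Nat.pos_of_ne_zero (Finsupp.mem_support_iff.mp hi))).trans (mul_apply_le_sum_mul α i)

lemma mem_partitionSymbols {k : ℕ} {α : ℕ →₀ ℕ} :
    α ∈ partitionSymbols k ↔ α 0 = 0 ∧ (α.sum fun i a => i * a) = k := by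
  refine ⟨fun h => (mem_filter.mp h).2, fun ⟨h0, hk⟩ => mem_filter.mpr ⟨?_, h0, hk⟩⟩
  refine mem_finsupp_iff.mpr ⟨support_subset_range_of_sum_mul_eq hk, fun i _ => ?_⟩
  rcases eq_or_ne i 0 with rfl | hi
  · simp [h0]
  · exact mem_range_succ_iff.mpr <| hk ▸
      (Nat.le_mul_of_pos_left _ (Nat.pos_of_ne_zero hi)).trans (mul_apply_le_sum_mul α i)

lemma partitionSymbols_zero : partitionSymbols 0 = {0} := by
  ext α
  rw [mem_partitionSymbols, mem_singleton]
  refine ⟨fun ⟨h0, hk⟩ => Finsupp.ext fun i => ?_, fun h => by simp [h]⟩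
  rcases eq_or_ne i 0 with rfl | hi
  · exact h0
  · exact (Nat.mul_eq_zero.mp (Nat.le_zero.mp (hk ▸ mul_apply_le_sum_mul α i))).resolve_left hi

lemma add_single_mem_partitionSymbols {β : ℕ →₀ ℕ} {i j : ℕ} (hβ : β ∈ partitionSymbols i)
    (hj : j ≠ 0) : β + Finsupp.single j 1 ∈ partitionSymbols (i + j) := by
  obtain ⟨h0, hi⟩ := mem_partitionSymbols.mp hβ
  exact mem_partitionSymbols.mpr ⟨by simp [h0, Finsupp.single_eq_of_ne hj.symm],
    by rw [sum_mul_add_single, hi]⟩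

lemma tsub_single_mem_partitionSymbols {α : ℕ →₀ ℕ} {i j : ℕ}
    (hα : α ∈ partitionSymbols (i + j)) (hαj : α j ≠ 0) :
    α - Finsupp.single j 1 ∈ partitionSymbols i := by
  obtain ⟨h0, hij⟩ := mem_partitionSymbols.mp hα
  have hα' := sum_mul_add_single (α - Finsupp.single j 1) j
  rw [tsub_add_cancel_of_le (Finsupp.single_le_iff.mpr (Nat.one_le_iff_ne_zero.mpr hαj)),
    hij] at hα'
  exact mem_partitionSymbols.mpr ⟨by simp [h0], by omega⟩

lemma sum_partitionSymbols_add_single {M : Type*} [AddCommMonoid M] (f : (ℕ →₀ ℕ) → M)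
    {i j : ℕ} (hj : j ≠ 0) :
    ∑ β ∈ partitionSymbols i, f (β + Finsupp.single j 1) =
      ∑ α ∈ partitionSymbols (i + j) with α j ≠ 0, f α := by
  refine sum_nbij' (· + Finsupp.single j 1) (· - Finsupp.single j 1) (fun β hβ => ?_)
    (fun α hα => ?_) (fun β _ => add_tsub_cancel_right _ _) (fun α hα => ?_) (fun _ _ => rfl)
  · exact mem_filter.mpr ⟨add_single_mem_partitionSymbols hβ hj, by simp⟩
  · obtain ⟨hα, hαj⟩ := mem_filter.mp hα
    exact tsub_single_mem_partitionSymbols hα hαj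
  · exact tsub_add_cancel_of_le
      (Finsupp.single_le_iff.mpr (Nat.one_le_iff_ne_zero.mpr (mem_filter.mp hα).2))

end PartitionSymbols

/-- `(-1)^(α 2 + α 4 + ⋯) · h(α) / k!` for a partition symbol `α` of `k`, with `k` cancelled. -/
noncomputable def waringCoeff (α : ℕ →₀ ℕ) : ℚ :=
  (-1) ^ (α.sum fun i a => if Even i then a else 0) *
    (α.prod fun i a => (a.factorial : ℚ) * (i : ℚ) ^ a)⁻¹

lemma waringCoeff_add_single (β : ℕ →₀ ℕ) {j : ℕ} (hj : j ≠ 0) :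
    (j * (β j + 1) : ℚ) * waringCoeff (β + Finsupp.single j 1) =
      (-1) ^ (j + 1) * waringCoeff β := by
  rw [waringCoeff, waringCoeff, Finsupp.sum_add_single_eq_add_sum_erase _ _ _ _ (by simp),
    Finsupp.prod_add_single_eq_mul_prod_erase _ _ _ _ (by simp),
    ← Finsupp.add_sum_erase' β j _ (by simp), ← Finsupp.mul_prod_erase' β j _ (by simp)]
  rcases Nat.even_or_odd j with he | ho
  · simp [he, pow_add, pow_succ, Nat.factorial_succ, he.add_one.neg_one_pow]
    field_simp
  · simp [Nat.not_even_iff_odd.mpr ho, pow_succ, Nat.factorial_succ, ho.add_one.neg_one_pow]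
    field_simp

section Waring

variable {A : Type*} [CommRing A] [Algebra ℚ A] (p : ℕ → A)

noncomputable def waringTerm (α : ℕ →₀ ℕ) : A :=
  waringCoeff α • α.prod fun i a => p i ^ a

noncomputable def waringSum (k : ℕ) : A :=
  ∑ α ∈ partitionSymbols k, waringTerm p α

lemma waringSum_zero : waringSum p 0 = 1 := by
  simp [waringSum, partitionSymbols_zero, waringTerm, waringCoeff]

lemma waringTerm_add_single (β : ℕ →₀ ℕ) {j : ℕ} (hj : j ≠ 0) :
    ((j * (β + Finsupp.single j 1 : ℕ →₀ ℕ) j : ℕ) : ℚ) • waringTerm p (β + Finsupp.single j 1) =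
      (-1 : ℚ) ^ (j + 1) • (p j * waringTerm p β) := by
  have hprod : (β + Finsupp.single j 1).prod (fun i a => p i ^ a) =
      p j * β.prod fun i a => p i ^ a := by
    rw [Finsupp.prod_add_single_eq_mul_prod_erase _ _ _ _ (by simp),
      ← Finsupp.mul_prod_erase' β j _ (by simp), pow_succ, mul_comm _ (p j), mul_assoc]
  rw [waringTerm, waringTerm, smul_smul, Finsupp.add_apply, Finsupp.single_eq_same, Nat.cast_mul,
    Nat.cast_succ, waringCoeff_add_single β hj, hprod, mul_smul, mul_smul_comm]

lemma sum_natCast_smul_waringTerm {i j : ℕ} (hj : j ≠ 0) :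
    ∑ α ∈ partitionSymbols (i + j), ((j * α j : ℕ) : ℚ) • waringTerm p α =
      (-1 : ℚ) ^ (j + 1) • (p j * waringSum p i) := by
  calc _ = ∑ α ∈ partitionSymbols (i + j) with α j ≠ 0, ((j * α j : ℕ) : ℚ) • waringTerm p α := by
        rw [sum_filter_of_ne]
        intro α _ h hαj
        simp [hαj] at h
    _ = ∑ β ∈ partitionSymbols i, (-1 : ℚ) ^ (j + 1) • (p j * waringTerm p β) := by
        rw [← sum_partitionSymbols_add_single _ hj]
        exact sum_congr rfl fun β _ => waringTerm_add_single p β hj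
    _ = _ := by rw [waringSum, mul_sum, smul_sum]

lemma sum_antidiagonal_snd_mul_apply {k : ℕ} {α : ℕ →₀ ℕ} (hα : α ∈ partitionSymbols k) :
    ∑ x ∈ antidiagonal k with x.1 < k, x.2 * α x.2 = k := by
  obtain ⟨-, hk⟩ := mem_partitionSymbols.mp hα
  rw [sum_filter_of_ne fun x hx h => ?_, ← Nat.sum_antidiagonal_swap]
  · simp only [Prod.snd_swap]
    rw [Nat.sum_antidiagonal_eq_sum_range_succ (fun i _ => i * α i)]
    exact (Finsupp.sum_of_support_subset α (support_subset_range_of_sum_mul_eq hk) _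
      fun i _ => mul_zero i).symm.trans hk
  · have hsum := mem_antidiagonal.mp hx
    have hx2 : x.2 ≠ 0 := left_ne_zero_of_mul h
    omega

theorem natCast_smul_waringSum (k : ℕ) :
    (k : ℚ) • waringSum p k =
      ∑ x ∈ antidiagonal k with x.1 < k, (-1 : ℚ) ^ (x.2 + 1) • (p x.2 * waringSum p x.1) := by
  calc (k : ℚ) • waringSum p k
      = ∑ α ∈ partitionSymbols k, ∑ x ∈ antidiagonal k with x.1 < k,
          ((x.2 * α x.2 : ℕ) : ℚ) • waringTerm p α := by
        rw [waringSum, smul_sum]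
        refine sum_congr rfl fun α hα => ?_
        rw [← sum_smul, ← Nat.cast_sum, sum_antidiagonal_snd_mul_apply hα]
    _ = _ := by
        rw [sum_comm]
        refine sum_congr rfl fun x hx => ?_
        obtain ⟨hx, hxk⟩ := mem_filter.mp hx
        rw [← mem_antidiagonal.mp hx] at hxk ⊢
        exact sum_natCast_smul_waringTerm p (by omega)

theorem natCast_mul_waringSum (k : ℕ) :
    (k : A) * waringSum p k = (-1) ^ (k + 1) *
      ∑ x ∈ antidiagonal k with x.1 < k, (-1) ^ x.1 * waringSum p x.1 * p x.2 := by
  rw [← nsmul_eq_mul, ← Nat.cast_smul_eq_nsmul ℚ, natCast_smul_waringSum, mul_sum]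
  refine sum_congr rfl fun x hx => ?_
  rw [Algebra.smul_def, map_pow, map_neg, map_one, ← mem_antidiagonal.mp (mem_filter.mp hx).1]
  have hsq : ((-1 : A) ^ x.1) * (-1) ^ x.1 = 1 := by rw [← mul_pow]; simp
  linear_combination ((-1 : A) ^ x.2 * waringSum p x.1 * p x.2) * hsq

end Waring

theorem eq_of_newton_recursion {A : Type*} [CommRing A] [Algebra ℚ A] {p e f : ℕ → A}
    (h0 : e 0 = f 0)
    (he : ∀ k : ℕ, (k : A) * e k = (-1) ^ (k + 1) *
      ∑ x ∈ antidiagonal k with x.1 < k, (-1) ^ x.1 * e x.1 * p x.2)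
    (hf : ∀ k : ℕ, (k : A) * f k = (-1) ^ (k + 1) *
      ∑ x ∈ antidiagonal k with x.1 < k, (-1) ^ x.1 * f x.1 * p x.2) :
    e = f := by
  funext k
  induction k using Nat.strong_induction_on with
  | _ k ih =>
    rcases eq_or_ne k 0 with rfl | hk
    · exact h0
    · have hunit : IsUnit (k : A) := by
        simpa using (Ne.isUnit (Nat.cast_ne_zero.mpr hk : (k : ℚ) ≠ 0)).map (algebraMap ℚ A)
      refine hunit.mul_left_cancel ?_
      rw [he, hf]
      congr 1
      exact sum_congr rfl fun x hx => by rw [ih x.1 (mem_filter.mp hx).2]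

theorem MvPolynomial.esymm_eq_waringSum (σ R : Type*) [Fintype σ] [CommRing R] [Algebra ℚ R]
    (k : ℕ) : esymm σ R k = waringSum (psum σ R) k :=
  congrFun (eq_of_newton_recursion (by rw [esymm_zero, waringSum_zero])
    (mul_esymm_eq_sum σ R) (natCast_mul_waringSum _)) k

theorem esymm_eq_sum_partitionSymbols_general (n k : ℕ) :
    esymm (Fin n) ℚ k =
      ∑ α ∈ partitionSymbols k,
        ((-1 : ℚ) ^ (α.sum fun i a => if Even i then a else 0) *
            (cauchyNumber k α / (k.factorial : ℚ))) •
          (α.prod fun i a => psum (Fin n) ℚ i ^ a) := by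
  rw [esymm_eq_waringSum, waringSum]
  refine sum_congr rfl fun α _ => ?_
  rw [waringTerm, waringCoeff, cauchyNumber, div_div_cancel_left' (by positivity)]

/-- Any elementary symmetric polynomial is a linear combination of products of power sums,
with coefficients given (up to an alternating sign) by the Cauchy enumeration formula:
`c_k = ∑_{α ⊨ k} (−1)^{α 2 + α 4 + ⋯} (h α / k!) · s_1 ^ α 1 ⋯ s_k ^ α k`. -/
theorem esymm_eq_sum_partitionSymbols (n k : ℕ) (hn : 1 ≤ n) (hk : 1 ≤ k) :
    esymm (Fin n) ℚ k =
      ∑ α ∈ partitionSymbols k,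
        ((-1 : ℚ) ^ (α.sum fun i a => if Even i then a else 0) *
            (cauchyNumber k α / (k.factorial : ℚ))) •
          (α.prod fun i a => psum (Fin n) ℚ i ^ a) :=
  esymm_eq_sum_partitionSymbols_general n k
end

section
/- For every k ≥ 1 and n ≥ 1, substituting the power sum polynomial s_i in n variables for the variable x_i in the Cauchy polynomial j_k yields k! times the elementary symmetric polynomial of degree k in n variables: j_k(s_1, s_2, …, s_k) = k! · c_k. -/
open MvPolynomial

/-- The unique `ℚ`-linear derivation `δ` of `ℚ[x₁, x₂, …]` with `δ xₖ = k · xₖ₊₁`. -/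
noncomputable def δ : Derivation ℚ (MvPolynomial ℕ ℚ) (MvPolynomial ℕ ℚ) :=
  mkDerivation ℚ fun k => (k : MvPolynomial ℕ ℚ) * X (k + 1)

/-- The Cauchy polynomials: `j 1 = x₁` and `j (k+1) = x₁ · j k − δ (j k)`.
(The value at `0` is a harmless base case making the recursion valid.) -/
noncomputable def cauchyJ : ℕ → MvPolynomial ℕ ℚ
  | 0 => 1
  | k + 1 => X 1 * cauchyJ k - δ (cauchyJ k)

/-!
Under `xᵢ ↦ sᵢ` the derivation `δ` becomes `D = ∑ⱼ yⱼ² ∂/∂yⱼ`, since `D sᵢ = i sᵢ₊₁`. So the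
images `Jₖ` of the Cauchy polynomials satisfy `Jₖ₊₁ = s₁ Jₖ − D Jₖ`, and it suffices that
`s₁ cₖ − D cₖ = (k+1) cₖ₊₁`. On a squarefree monomial `D` multiplies by the sum of its
variables, so `s₁ ∏_S y − D ∏_S y = ∑_{j ∉ S} y_j ∏_S y`; summed over `|S| = k`, every
`(k+1)`-subset arises once from each of its `k+1` elements.
-/

open Finset

theorem Finset.sum_powersetCard_sum_sdiff_insert {α M : Type*} [DecidableEq α] [AddCommMonoid M]
    (s : Finset α) (k : ℕ) (f : Finset α → α → M) :
    ∑ S ∈ powersetCard k s, ∑ j ∈ s \ S, f (insert j S) j =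
      ∑ T ∈ powersetCard (k + 1) s, ∑ j ∈ T, f T j := by
  rw [sum_sigma', sum_sigma']
  refine sum_nbij' (fun x => ⟨insert x.2 x.1, x.2⟩) (fun y => ⟨y.1.erase y.2, y.2⟩)
    ?_ ?_ ?_ ?_ fun _ _ => rfl
  · rintro ⟨S, j⟩ hx
    simp only [mem_sigma, mem_powersetCard, mem_sdiff] at hx ⊢
    exact ⟨⟨insert_subset hx.2.1 hx.1.1, by rw [card_insert_of_notMem hx.2.2, hx.1.2]⟩,
      mem_insert_self _ _⟩
  · rintro ⟨T, j⟩ hy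
    simp only [mem_sigma, mem_powersetCard, mem_sdiff] at hy ⊢
    refine ⟨⟨(erase_subset _ _).trans hy.1.1, ?_⟩, hy.1.1 hy.2, notMem_erase _ _⟩
    rw [card_erase_of_mem hy.2, hy.1.2, Nat.add_sub_cancel]
  · rintro ⟨S, j⟩ hx
    simp only [mem_sigma, mem_sdiff] at hx
    simp [erase_insert hx.2.2]
  · rintro ⟨T, j⟩ hy
    simp only [mem_sigma] at hy
    simp [insert_erase hy.2]

theorem δ_X (i : ℕ) : δ (X i) = (i : MvPolynomial ℕ ℚ) * X (i + 1) := mkDerivation_X _ _ _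

namespace MvPolynomial

variable (σ R : Type*) [CommRing R]

noncomputable def sqDerivation : Derivation R (MvPolynomial σ R) (MvPolynomial σ R) :=
  mkDerivation R fun j => X j ^ 2

variable {σ R}

theorem sqDerivation_X (j : σ) : sqDerivation σ R (X j) = X j ^ 2 := mkDerivation_X _ _ _

theorem sqDerivation_prod_X (S : Finset σ) :
    sqDerivation σ R (∏ i ∈ S, X i) = (∑ j ∈ S, X j) * ∏ i ∈ S, X i := by
  classical
  induction S using Finset.induction with
  | empty => simp
  | insert a S ha ih =>
    rw [prod_insert ha, Derivation.leibniz, ih, sum_insert ha, sqDerivation_X,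
      smul_eq_mul, smul_eq_mul]
    ring

variable [Fintype σ]

theorem sqDerivation_psum (i : ℕ) :
    sqDerivation σ R (psum σ R i) = i * psum σ R (i + 1) := by
  rcases Nat.eq_zero_or_pos i with rfl | hi
  · simp [psum]
  · simp only [psum, map_sum, Derivation.leibniz_pow, sqDerivation_X, mul_sum, nsmul_eq_mul,
      smul_eq_mul, ← pow_add]
    refine sum_congr rfl fun j _ => ?_
    rw [show i - 1 + 2 = i + 1 by omega]

theorem psum_one_mul_esymm_sub_sqDerivation (k : ℕ) :
    psum σ R 1 * esymm σ R k - sqDerivation σ R (esymm σ R k) =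
      (k + 1) * esymm σ R (k + 1) := by
  classical
  have monomial (S : Finset σ) :
      psum σ R 1 * ∏ i ∈ S, X i - sqDerivation σ R (∏ i ∈ S, X i) =
        ∑ j ∈ univ \ S, ∏ i ∈ insert j S, X i := by
    rw [sqDerivation_prod_X, psum_one, ← sum_sdiff (subset_univ S), add_mul, add_sub_cancel_right,
      sum_mul]
    refine sum_congr rfl fun j hj => ?_
    rw [prod_insert (mem_sdiff.mp hj).2]
  have card_mul (T : Finset σ) (hT : T ∈ powersetCard (k + 1) univ) :
      ∑ _j ∈ T, ∏ i ∈ T, X i = ((k : MvPolynomial σ R) + 1) * ∏ i ∈ T, X i := by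
    rw [sum_const, mem_powersetCard_univ.mp hT, nsmul_eq_mul]
    push_cast
    ring
  simp only [esymm, map_sum, mul_sum, ← sum_sub_distrib, monomial,
    sum_powersetCard_sum_sdiff_insert univ k fun T _ => ∏ i ∈ T, (X i : MvPolynomial σ R)]
  exact sum_congr rfl card_mul

theorem aeval_psum_δ [Algebra ℚ R] (p : MvPolynomial ℕ ℚ) :
    aeval (fun i : ℕ => psum σ R i) (δ p) =
      sqDerivation σ R (aeval (fun i : ℕ => psum σ R i) p) := by
  induction p using MvPolynomial.induction_on with
  | C a => rw [derivation_C, map_zero, aeval_C, algebraMap_apply, derivation_C]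
  | add p q hp hq => simp only [map_add, hp, hq]
  | mul_X p i hp =>
    simp only [Derivation.leibniz, smul_eq_mul, map_add, map_mul, aeval_X, hp, δ_X,
      sqDerivation_psum, map_natCast]

end MvPolynomial

theorem aeval_psum_cauchyJ_general (k n : ℕ) :
    aeval (fun i : ℕ => psum (Fin n) ℚ i) (cauchyJ k) =
      (k.factorial : MvPolynomial (Fin n) ℚ) * esymm (Fin n) ℚ k := by
  induction k with
  | zero => simp [cauchyJ, esymm_zero]
  | succ k ih =>
    rw [cauchyJ, map_sub, map_mul, aeval_X, aeval_psum_δ, ih, Derivation.leibniz,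
      Derivation.map_natCast, smul_zero, add_zero, smul_eq_mul, Nat.factorial_succ]
    push_cast
    linear_combination (k.factorial : MvPolynomial (Fin n) ℚ) *
      psum_one_mul_esymm_sub_sqDerivation (σ := Fin n) (R := ℚ) k

/-- Substituting the power sum `sᵢ` in `n` variables for the variable `xᵢ` in the Cauchy
polynomial `jₖ` yields `k!` times the elementary symmetric polynomial of degree `k`:
`jₖ (s₁, …, sₖ) = k! · cₖ`. -/
theorem aeval_psum_cauchyJ (k n : ℕ) (hk : 1 ≤ k) (hn : 1 ≤ n) :
    aeval (fun i : ℕ => psum (Fin n) ℚ i) (cauchyJ k) =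
      (k.factorial : MvPolynomial (Fin n) ℚ) * esymm (Fin n) ℚ k :=
  aeval_psum_cauchyJ_general k n
end

section
/- For every n ≥ 2, the partial derivative with respect to the first variable acts as a lowering operator on the Cauchy polynomials: ∂j_n/∂x_1 = n · j_{n−1}. -/
open MvPolynomial

lemma delta_X (k : ℕ) : δ (X k) = (k : MvPolynomial ℕ ℚ) * X (k + 1) := by
  simp [δ, mkDerivation_X]

/-- `∂₁` commutes with `δ`. -/
lemma pderiv_delta_comm (f : MvPolynomial ℕ ℚ) :
    pderiv 1 (δ f) = δ (pderiv 1 f) := by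
  induction f using MvPolynomial.induction_on with
  | C a => simp
  | add p q hp hq => simp [hp, hq]
  | mul_X p k hp =>
    rw [Derivation.leibniz, delta_X]
    rcases eq_or_ne k 1 with rfl | hk
    · simp [hp, delta_X, Derivation.leibniz]
      ring
    · rcases eq_or_ne k 0 with rfl | h0
      · simp [hp, delta_X, Derivation.leibniz]
      · simp [hp, delta_X, Derivation.leibniz, pderiv_X, Pi.single_apply, hk, h0,
          (by omega : ¬ (1 : ℕ) = k + 1)]
        ring

lemma key (n : ℕ) :
    pderiv 1 (cauchyJ (n + 1)) = (n + 1) • cauchyJ n := by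
  induction n with
  | zero => simp [cauchyJ]
  | succ m ih =>
    have h2 : cauchyJ (m + 2) = X 1 * cauchyJ (m + 1) - δ (cauchyJ (m + 1)) := rfl
    have h1 : cauchyJ (m + 1) = X 1 * cauchyJ m - δ (cauchyJ m) := rfl
    rw [h2, map_sub, pderiv_delta_comm, pderiv_mul, ih, map_nsmul, pderiv_X_self]
    rw [nsmul_eq_mul, nsmul_eq_mul, nsmul_eq_mul, h1]
    push_cast
    ring

/-- The partial derivative with respect to the first variable acts as a lowering operator
on the Cauchy polynomials:  `∂ jₙ / ∂ x₁ = n · jₙ₋₁` for `n ≥ 2`. -/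
theorem pderiv_one_cauchyJ (n : ℕ) (hn : 2 ≤ n) :
    pderiv 1 (cauchyJ n) = (n : MvPolynomial ℕ ℚ) * cauchyJ (n - 1) := by
  obtain ⟨m, rfl⟩ : ∃ m, n = m + 1 := ⟨n - 1, by omega⟩
  rw [key, nsmul_eq_mul, Nat.add_sub_cancel]
end

section
/- Let A be an n×n matrix over ℚ and 1 ≤ k ≤ n. Then k! · J_k(A) = Σ_{σ ∈ S_k} sgn(σ) · Σ_{f : {1,…,k} → {1,…,n}} ∏_{m=1}^{k} A_{f(m), f(σ(m))}, where the inner sum runs over all functions f from {1,…,k} to the index set {1,…,n}. -/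
/-- The `k`-th prodeterminant of an `n × n` matrix: `(−1)^k` times the coefficient of
`λ^(n−k)` in the characteristic polynomial `det (λ·I − A)`. -/
noncomputable def prodet {n : ℕ} (A : Matrix (Fin n) (Fin n) ℚ) (k : ℕ) : ℚ :=
  (-1) ^ k * A.charpoly.coeff (n - k)

/-!
For a fixed `f`, the alternating sum over `σ` is the Leibniz expansion of the minor
`det (A (f i) (f j))`. This minor vanishes unless `f` is injective, and an injective `f` is an
enumeration of its image `s`, a `k`-subset, giving the principal minor of `A` on `s`; each
`k`-subset has `k!` enumerations. So the right-hand side is `k!` times the sum of the principal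
`k × k` minors, which is `(-1)^k` times the coefficient of `λ^(n-k)` in the characteristic
polynomial.
-/

open Finset Matrix Equiv

namespace Matrix

variable {R ι κ : Type*} [CommRing R] [Fintype κ] [DecidableEq κ]

theorem det_eq_sum_sign_mul_prod_apply_perm (M : Matrix κ κ R) :
    M.det = ∑ σ : Perm κ, ((Perm.sign σ : ℤ) : R) * ∏ i, M i (σ i) := by
  rw [← det_transpose, det_apply']
  rfl

theorem det_submatrix_eq_zero_of_not_injective (A : Matrix ι ι R) {f : κ → ι}
    (hf : ¬ Function.Injective f) (g : κ → ι) : (A.submatrix f g).det = 0 := by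
  obtain ⟨i, j, hfij, hij⟩ := Function.not_injective_iff.mp hf
  exact det_zero_of_row_eq hij (funext fun m => by simp [hfij])

variable [Fintype ι] [DecidableEq ι]

theorem sum_det_submatrix_filter_image_eq (A : Matrix ι ι R) {s : Finset ι}
    (hs : #s = Fintype.card κ) :
    ∑ f : κ → ι with univ.image f = s, (A.submatrix f f).det =
      (Fintype.card κ).factorial * (A.submatrix (Subtype.val : s → ι) Subtype.val).det := by
  have hcard : Fintype.card κ = Fintype.card s := by simp [hs]
  rw [← Fintype.card_equiv (Fintype.equivOfCardEq hcard), ← card_univ, ← nsmul_eq_mul,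
    ← sum_const]
  symm
  refine sum_bij (fun (e : κ ≃ s) _ => Subtype.val ∘ e) ?maps_to ?inj ?surj ?value
  case maps_to =>
    intro e _
    refine mem_filter.mpr ⟨mem_univ _, ?_⟩
    ext x
    simpa using ⟨fun ⟨i, hi⟩ => hi ▸ (e i).2, fun hx => ⟨e.symm ⟨x, hx⟩, by simp⟩⟩
  case inj =>
    intro e₁ _ e₂ _ h
    ext i
    exact congrFun h i
  case surj =>
    intro f hf
    obtain ⟨-, himage⟩ := mem_filter.mp hf
    have hmem : ∀ i, f i ∈ s := fun i => himage ▸ mem_image_of_mem f (mem_univ i)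
    have hinj : Function.Injective f := by
      rw [← Set.injOn_univ, ← coe_univ, ← card_image_iff, himage, hs, card_univ]
    have hbij : Function.Bijective fun i => (⟨f i, hmem i⟩ : s) := by
      rw [Fintype.bijective_iff_injective_and_card]
      exact ⟨fun a b hab => hinj (Subtype.ext_iff.mp hab), hcard⟩
    exact ⟨Equiv.ofBijective _ hbij, mem_univ _, rfl⟩
  case value =>
    intro e _
    exact (det_submatrix_equiv_self e _).symm

theorem sum_det_submatrix_eq_factorial_mul_sum_minors (A : Matrix ι ι R) :
    ∑ f : κ → ι, (A.submatrix f f).det =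
      (Fintype.card κ).factorial * ∑ s ∈ univ.powersetCard (Fintype.card κ),
        (A.submatrix (Subtype.val : s → ι) Subtype.val).det := by
  rw [← sum_fiberwise univ (fun f : κ → ι => univ.image f), mul_sum, ← powerset_univ,
    powersetCard_eq_filter, sum_filter]
  refine sum_congr rfl fun s _ => ?_
  split_ifs with hs
  · exact sum_det_submatrix_filter_image_eq A hs
  · refine sum_eq_zero fun f hf => det_submatrix_eq_zero_of_not_injective A (fun hinj => hs ?_) f
    rw [← (mem_filter.mp hf).2, card_image_of_injective _ hinj, card_univ]

end Matrix

theorem factorial_prodet_eq_sum_perm_general (n k : ℕ) (hkn : k ≤ n)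
    (A : Matrix (Fin n) (Fin n) ℚ) :
    (k.factorial : ℚ) * prodet A k =
      ∑ σ : Equiv.Perm (Fin k),
        ((Equiv.Perm.sign σ : ℤ) : ℚ) *
          ∑ f : Fin k → Fin n, ∏ m : Fin k, A (f m) (f (σ m)) := by
  have hcoeff := A.charpoly_coeff_eq_sum_minors k (by simpa using hkn)
  rw [Fintype.card_fin] at hcoeff
  calc (k.factorial : ℚ) * prodet A k
      = k.factorial * ∑ s ∈ univ.powersetCard k,
          (A.submatrix (Subtype.val : s → Fin n) Subtype.val).det := by
        rw [prodet, hcoeff, ← mul_assoc ((-1 : ℚ) ^ k), ← pow_add, Even.neg_one_pow ⟨k, rfl⟩,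
          one_mul]
    _ = ∑ f : Fin k → Fin n, (A.submatrix f f).det := by
        rw [sum_det_submatrix_eq_factorial_mul_sum_minors, Fintype.card_fin]
    _ = _ := by
        simp_rw [det_eq_sum_sign_mul_prod_apply_perm, submatrix_apply, mul_sum]
        exact sum_comm

/-- Prodeterminants as "averages" over traces:
`k! · Jₖ(A) = ∑_{σ ∈ S_k} sgn σ · ∑_{f : {1,…,k} → {1,…,n}} ∏ₘ A_{f(m), f(σ(m))}`,
the inner sum running over all functions `f` from `{1, …, k}` to the index set. -/
theorem factorial_prodet_eq_sum_perm (n k : ℕ) (hk : 1 ≤ k) (hkn : k ≤ n)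
    (A : Matrix (Fin n) (Fin n) ℚ) :
    (k.factorial : ℚ) * prodet A k =
      ∑ σ : Equiv.Perm (Fin k),
        ((Equiv.Perm.sign σ : ℤ) : ℚ) *
          ∑ f : Fin k → Fin n, ∏ m : Fin k, A (f m) (f (σ m)) :=
  factorial_prodet_eq_sum_perm_general n k hkn A
end
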